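/- Cut lemma for typings: if Γ, x:B ⊢ Mx : A where x does not occur in M, and Γ' ⊢ N : B, then there is a basis Γ'' such that Γ'' ⊢ MN : A. One can take Γ'' combining Γ and Γ' pointwise by intersection on shared variables. -/
import Mathlib


/-- Pure λ-terms with variables named by natural numbers. -/
inductive Tm : Type
  | var : ℕ → Tm
  | lam : ℕ → Tm → Tm
  | app : Tm → Tm → Tm
deriving DecidableEq

namespace Tm

/-- Free variables of a term. -/
def fv : Tm → Finset ℕ
  | var x => {x}
  | lam x t => fv t \ {x}
  | app t u => fv t ∪ fv u

/-- A variable fresh for a given finite set of variables. -/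
def fresh (s : Finset ℕ) : ℕ := (s.sup id) + 1

/-- Capture-avoiding simultaneous substitution. -/
def subst (σ : ℕ → Tm) : Tm → Tm
  | var x => σ x
  | app t u => app (subst σ t) (subst σ u)
  | lam x t =>
      let y := fresh ((fv t \ {x}).biUnion fun z => fv (σ z))
      lam y (subst (fun z => if z = x then var y else σ z) t)

/-- `M[x := N]`. -/
def subst1 (x : ℕ) (N M : Tm) : Tm :=
  subst (fun z => if z = x then N else var z) M

/-- `λx₁…xₙ. t`. -/
def lams (xs : List ℕ) (t : Tm) : Tm := xs.foldr lam t

/-- `t M₁ ⋯ Mₘ`. -/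
def apps (t : Tm) (ts : List Tm) : Tm := ts.foldl app t

/-- One-step β-reduction: contextual closure of the β-rule. -/
inductive Step : Tm → Tm → Prop
  | beta (x : ℕ) (M N : Tm) : Step (app (lam x M) N) (subst1 x N M)
  | appL {M M' : Tm} (N : Tm) : Step M M' → Step (app M N) (app M' N)
  | appR (M : Tm) {N N' : Tm} : Step N N' → Step (app M N) (app M N')
  | abs (x : ℕ) {M M' : Tm} : Step M M' → Step (lam x M) (lam x M')

/-- β-reduction: reflexive-transitive closure of one-step β-reduction. -/
def Red : Tm → Tm → Prop := Relation.ReflTransGen Step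

/-- β-convertibility: the equivalence relation generated by β-reduction. -/
def Conv : Tm → Tm → Prop := Relation.EqvGen Step

/-- `M` is solvable if `(λx⃗.M) N₁ ⋯ Nₙ` β-reduces to the identity,
where `x⃗` covers the free variables of `M`. -/
def Solvable (M : Tm) : Prop :=
  ∃ (xs : List ℕ) (Ns : List Tm) (y : ℕ),
    M.fv ⊆ xs.toFinset ∧ Red (apps (lams xs M) Ns) (lam y (var y))

/-- One-step head reduction: contraction of the head redex. -/
inductive HeadStep : Tm → Tm → Prop
  | beta (x : ℕ) (M N : Tm) (Ms : List Tm) :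
      HeadStep (apps (app (lam x M) N) Ms) (apps (subst1 x N M) Ms)
  | abs (x : ℕ) {M M' : Tm} : HeadStep M M' → HeadStep (lam x M) (lam x M')

end Tm

/-- Intersection types over a set `A` of constants, with top `𝖴`. -/
inductive Ty (A : Type) : Type
  | const : A → Ty A
  | top : Ty A
  | arrow : Ty A → Ty A → Ty A
  | inter : Ty A → Ty A → Ty A
deriving DecidableEq

/-- An intersection type theory: a subtyping relation on `Ty A` closed under
(Refl), (IncL), (IncR), (𝖴top), (Glb), (Trans) and (→∼). -/
structure ITT (A : Type) where
  le : Ty A → Ty A → Prop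
  le_refl : ∀ a, le a a
  le_incL : ∀ a b, le (Ty.inter b a) b
  le_incR : ∀ a b, le (Ty.inter b a) a
  le_top : ∀ a, le a Ty.top
  le_glb : ∀ {a b c}, le c a → le c b → le c (Ty.inter a b)
  le_trans : ∀ {a b c}, le a b → le b c → le a c
  arrow_cong : ∀ {a a' b b'}, le a a' → le a' a → le b b' → le b' b →
      le (Ty.arrow a b) (Ty.arrow a' b')

variable {A : Type}

/-- The equivalence `∼` induced by the subtyping. -/
def ITT.eqv (T : ITT A) (a b : Ty A) : Prop := T.le a b ∧ T.le b a

/-- Bases: (partial) mappings from term variables to types. -/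
def Ctx (A : Type) := ℕ → Option (Ty A)

def Ctx.empty : Ctx A := fun _ => none

/-- `Γ, x:a`. -/
def Ctx.update (Γ : Ctx A) (x : ℕ) (a : Ty A) : Ctx A :=
  fun y => if y = x then some a else Γ y

/-- The intersection type assignment system induced by an itt `T`:
rules (Ax), (𝖴), (→I), (→E), (∩I) and (≤). -/
inductive Der (T : ITT A) : Ctx A → Tm → Ty A → Prop
  | ax {Γ : Ctx A} {x a} : Γ x = some a → Der T Γ (Tm.var x) a
  | top {Γ M} : Der T Γ M Ty.top
  | arrI {Γ : Ctx A} {x M a b} :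
      Der T (Γ.update x b) M a → Der T Γ (Tm.lam x M) (Ty.arrow b a)
  | arrE {Γ M N a b} :
      Der T Γ M (Ty.arrow b a) → Der T Γ N b → Der T Γ (Tm.app M N) a
  | interI {Γ M a b} : Der T Γ M a → Der T Γ M b → Der T Γ M (Ty.inter a b)
  | sub {Γ M a b} : Der T Γ M a → T.le a b → Der T Γ M b

/-- Finite intersection `⋂_{i∈I} Aᵢ`, with `⋂_∅ = 𝖴`. -/
def interList : List (Ty A) → Ty A
  | [] => Ty.top
  | a :: l => Ty.inter a (interList l)

/-- `Γ₁ ⋓ Γ₂`: pointwise combination of two bases, intersecting the types of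
shared variables. -/
def Ctx.combine {A : Type} (Γ Γ' : Ctx A) : Ctx A := fun y =>
  match Γ y, Γ' y with
  | some c, some c' => some (Ty.inter c c')
  | some c, none => some c
  | none, o => o


section Aux
variable {A : Type} {T : ITT A}

lemma interList_append_le_left (l1 l2 : List (Ty A)) :
    T.le (interList (l1 ++ l2)) (interList l1) := by
  induction l1 with
  | nil => exact T.le_top _
  | cons p l ih => exact T.le_glb (T.le_incL _ _) (T.le_trans (T.le_incR _ _) ih)

lemma interList_append_le_right (l1 l2 : List (Ty A)) :
    T.le (interList (l1 ++ l2)) (interList l2) := by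
  induction l1 with
  | nil => exact T.le_refl _
  | cons p l ih => exact T.le_trans (T.le_incR _ _) ih

lemma der_mono : ∀ {Δ : Ctx A} {P c}, Der T Δ P c → ∀ Δ' : Ctx A,
    (∀ y ∈ P.fv, ∀ d, Δ y = some d → ∃ d', Δ' y = some d' ∧ T.le d' d) →
    Der T Δ' P c := by
  intro Δ P c h
  induction h with
  | @ax Γ y d hy =>
    intro Δ' hΔ
    obtain ⟨d', hd', hle⟩ := hΔ y (by simp [Tm.fv]) d hy
    exact Der.sub (Der.ax hd') hle
  | top => intro _ _; exact Der.top
  | @arrI Γ y M' a' b' _ ih =>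
    intro Δ' hΔ
    refine Der.arrI (ih (Δ'.update y b') ?_)
    intro z hz d hd
    by_cases hzy : z = y
    · subst hzy
      simp [Ctx.update] at hd ⊢
      exact hd ▸ T.le_refl d
    · simp [Ctx.update, hzy] at hd ⊢
      exact hΔ z (by simp [Tm.fv, hz, hzy]) d hd
  | @arrE Γ M' N' a' b' _ _ ih1 ih2 =>
    intro Δ' hΔ
    exact Der.arrE (ih1 Δ' fun y hy => hΔ y (by simp [Tm.fv, hy]))
      (ih2 Δ' fun y hy => hΔ y (by simp [Tm.fv, hy]))
  | interI _ _ ih1 ih2 => intro Δ' hΔ; exact Der.interI (ih1 Δ' hΔ) (ih2 Δ' hΔ)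
  | sub _ hle ih => intro Δ' hΔ; exact Der.sub (ih Δ' hΔ) hle

lemma var_gen : ∀ {Δ : Ctx A} {y c}, Der T Δ (Tm.var y) c →
    ∀ {c'}, Δ y = some c' → T.le c' c := by
  intro Δ y c h
  generalize hP : Tm.var y = P at h
  induction h with
  | @ax Γ z d hz =>
    intro c' hc'
    cases hP
    rw [hz] at hc'
    cases hc'
    exact T.le_refl _
  | top => intro c' _; exact T.le_top _
  | arrI _ _ => exact absurd hP (by simp)
  | arrE _ _ _ _ => exact absurd hP (by simp)
  | interI _ _ ih1 ih2 => intro c' hc'; exact T.le_glb (ih1 hP hc') (ih2 hP hc')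
  | sub _ hle ih => intro c' hc'; exact T.le_trans (ih hP hc') hle

lemma app_gen : ∀ {Δ : Ctx A} {M N c}, Der T Δ (Tm.app M N) c →
    ∃ l : List (Ty A × Ty A),
      (∀ p ∈ l, Der T Δ M (Ty.arrow p.1 p.2) ∧ Der T Δ N p.1) ∧
      T.le (interList (l.map Prod.snd)) c := by
  intro Δ M N c h
  generalize hP : Tm.app M N = P at h
  induction h with
  | ax _ => exact absurd hP (by simp)
  | top => exact ⟨[], by simp, T.le_refl _⟩
  | arrI _ _ => exact absurd hP (by simp)
  | @arrE Γ M' N' a' b' h1 h2 _ _ =>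
    cases hP
    exact ⟨[(b', a')], by simp [h1, h2], T.le_incL _ _⟩
  | interI _ _ ih1 ih2 =>
    obtain ⟨l1, h1, hle1⟩ := ih1 hP
    obtain ⟨l2, h2, hle2⟩ := ih2 hP
    refine ⟨l1 ++ l2, ?_, ?_⟩
    · intro p hp
      rcases List.mem_append.mp hp with h | h
      exacts [h1 p h, h2 p h]
    · rw [List.map_append]
      exact T.le_glb (T.le_trans (interList_append_le_left _ _) hle1)
        (T.le_trans (interList_append_le_right _ _) hle2)
  | sub _ hle ih =>
    obtain ⟨l, h1, hle1⟩ := ih hP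
    exact ⟨l, h1, T.le_trans hle1 hle⟩

end Aux

/-- Cut lemma for typings: if `Γ, x:B ⊢ Mx : A` where `x` does
not occur in `M`, and `Γ' ⊢ N : B`, then there is a basis `Γ''` (one can take
`Γ ⋓ Γ'`) such that `Γ'' ⊢ MN : A`. -/
theorem cut_lemma {A : Type} (T : ITT A) (Γ Γ' : Ctx A) (x : ℕ) (M N : Tm)
    (a b : Ty A) (hx : x ∉ M.fv)
    (h1 : Der T (Γ.update x b) (Tm.app M (Tm.var x)) a)
    (h2 : Der T Γ' N b) :
    ∃ Γ'' : Ctx A, Γ'' = Ctx.combine Γ Γ' ∧ Der T Γ'' (Tm.app M N) a := by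
  refine ⟨Ctx.combine Γ Γ', rfl, ?_⟩
  obtain ⟨l, hl, hle⟩ := app_gen h1
  have hN : Der T (Ctx.combine Γ Γ') N b := by
    refine der_mono h2 _ ?_
    intro y _ d hd
    unfold Ctx.combine
    cases hΓ : Γ y with
    | none => exact ⟨d, by simp [hΓ, hd], T.le_refl d⟩
    | some c => exact ⟨Ty.inter c d, by simp [hΓ, hd], T.le_incR _ _⟩
  have key : ∀ p ∈ l, Der T (Ctx.combine Γ Γ') (Tm.app M N) p.2 := by
    intro p hp
    obtain ⟨hM, hVar⟩ := hl p hp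
    have hbp : T.le b p.1 := var_gen hVar (by simp [Ctx.update])
    have hM' : Der T (Ctx.combine Γ Γ') M (Ty.arrow p.1 p.2) := by
      refine der_mono hM _ ?_
      intro y hy d hd
      have hyx : y ≠ x := fun h => hx (h ▸ hy)
      rw [Ctx.update, if_neg hyx] at hd
      unfold Ctx.combine
      cases hΓ' : Γ' y with
      | none => exact ⟨d, by simp [hΓ', hd], T.le_refl d⟩
      | some c => exact ⟨Ty.inter d c, by simp [hΓ', hd], T.le_incL _ _⟩
    exact Der.arrE hM' (Der.sub hN hbp)
  refine Der.sub ?_ hle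
  clear hle
  induction l with
  | nil => exact Der.top
  | cons p l ih =>
    exact Der.interI (key p (by simp))
      (ih (fun q hq => hl q (by simp [hq])) (fun q hq => key q (by simp [hq])))
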